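/- For any topological spaces X and Y, pd(X × Y) ≤ |Y| · pd(X); in particular, if |Y| ≤ pd(X) and pd(X) is infinite then pd(X × Y) = pd(X). -/
import Mathlib


open Cardinal Set Topology

universe u v

/-- A neighborhood assignment on a topological space. -/
def NbhdAssign {X : Type u} [TopologicalSpace X] (U : X → Set X) : Prop :=
  ∀ x, IsOpen (U x) ∧ x ∈ U x

/-- The pinning down number of a family of sets: the least cardinality of a set
meeting every nonempty member of the family. -/
noncomputable def pdFam {α : Type u} (𝒜 : Set (Set α)) : Cardinal.{u} :=
  sInf {c | ∃ A : Set α, #A = c ∧ ∀ S ∈ 𝒜, S.Nonempty → (A ∩ S).Nonempty}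

/-- The pinning down number of a neighborhood assignment. -/
noncomputable def pdAssign {X : Type u} [TopologicalSpace X] (U : X → Set X) : Cardinal.{u} :=
  sInf {c | ∃ A : Set X, #A = c ∧ ∀ x, (A ∩ U x).Nonempty}

/-- The pinning down number of a topological space. -/
noncomputable def pdSpace (X : Type u) [TopologicalSpace X] : Cardinal.{u} :=
  ⨆ U : {U : X → Set X // NbhdAssign U}, pdAssign U.1

/-- The density of a topological space. -/
noncomputable def density (X : Type u) [TopologicalSpace X] : Cardinal.{u} :=
  sInf {c | ∃ D : Set X, #D = c ∧ Dense D}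

/-- The cellularity of a topological space. -/
noncomputable def cellularity (X : Type u) [TopologicalSpace X] : Cardinal.{u} :=
  ⨆ 𝒞 : {C : Set (Set X) // (∀ U ∈ C, IsOpen U ∧ U.Nonempty) ∧ C.PairwiseDisjoint id}, #𝒞.1

/-- `Δ(X)`: the least cardinality of a nonempty open subset of `X`. -/
noncomputable def Delta (X : Type u) [TopologicalSpace X] : Cardinal.{u} :=
  sInf {c | ∃ G : Set X, IsOpen G ∧ G.Nonempty ∧ #G = c}

/-- A space is neat if `Δ(X) = |X|`. -/
def Neat (X : Type u) [TopologicalSpace X] : Prop := Delta X = #X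

lemma pdAssign_le {X : Type u} [TopologicalSpace X] (U : X → Set X) {A : Set X}
    (h : ∀ x, (A ∩ U x).Nonempty) : pdAssign U ≤ #A :=
  csInf_le' ⟨A, rfl, h⟩

lemma pdAssign_spec {X : Type u} [TopologicalSpace X] (U : X → Set X) (hU : NbhdAssign U) :
    ∃ A : Set X, #A = pdAssign U ∧ ∀ x, (A ∩ U x).Nonempty := by
  have hne : {c | ∃ A : Set X, #A = c ∧ ∀ x, (A ∩ U x).Nonempty}.Nonempty :=
    ⟨#(univ : Set X), univ, rfl, fun x => ⟨x, mem_univ x, (hU x).2⟩⟩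
  exact csInf_mem hne

lemma pdAssign_le_pdSpace {X : Type u} [TopologicalSpace X] (U : X → Set X)
    (hU : NbhdAssign U) : pdAssign U ≤ pdSpace X :=
  le_ciSup (Cardinal.bddAbove_range _) (⟨U, hU⟩ : {U : X → Set X // NbhdAssign U})

/-- `pd(X × Y) ≤ |Y| ⬝ pd(X)`; in particular if `|Y| ≤ pd(X)` and `pd(X)`
is infinite then `pd(X × Y) = pd(X)` (for nonempty `Y`, so that `X` is a continuous
image of `X × Y`). -/
theorem pd_prod_le (X : Type u) [TopologicalSpace X] (Y : Type u) [TopologicalSpace Y] :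
    pdSpace (X × Y) ≤ #Y * pdSpace X ∧
    (Nonempty Y → #Y ≤ pdSpace X → ℵ₀ ≤ pdSpace X → pdSpace (X × Y) = pdSpace X) := by
  have main : pdSpace (X × Y) ≤ #Y * pdSpace X := by
    apply ciSup_le'
    rintro ⟨W, hW⟩
    have h : ∀ p : X × Y, ∃ u v, IsOpen u ∧ IsOpen v ∧ p.1 ∈ u ∧ p.2 ∈ v ∧ u ×ˢ v ⊆ W p := by
      intro p
      rcases isOpen_prod_iff.1 (hW p).1 p.1 p.2 (hW p).2 with ⟨u, v, h1, h2, h3, h4, h5⟩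
      exact ⟨u, v, h1, h2, h3, h4, h5⟩
    choose u v hu hv hxu hyv hsub using h
    have key : ∀ y : Y, ∃ A : Set X, #A ≤ pdSpace X ∧ ∀ x, (A ∩ u (x, y)).Nonempty := by
      intro y
      have hN : NbhdAssign (fun x => u (x, y)) := fun x => ⟨hu _, hxu _⟩
      obtain ⟨A, hA, hA2⟩ := pdAssign_spec _ hN
      exact ⟨A, hA ▸ pdAssign_le_pdSpace _ hN, hA2⟩
    choose A hAle hApin using key
    have hBpin : ∀ p : X × Y, ((⋃ y, (fun a => (a, y)) '' A y) ∩ W p).Nonempty := by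
      rintro ⟨x, y⟩
      obtain ⟨a, haA, hau⟩ := hApin y x
      exact ⟨(a, y), mem_iUnion.2 ⟨y, ⟨a, haA, rfl⟩⟩, hsub (x, y) ⟨hau, hyv (x, y)⟩⟩
    calc pdAssign W ≤ #(⋃ y, (fun a => (a, y)) '' A y) := pdAssign_le _ hBpin
      _ ≤ #Y * ⨆ y, #((fun a => (a, y)) '' A y) := Cardinal.mk_iUnion_le _
      _ ≤ #Y * pdSpace X := by
          refine mul_le_mul_right (ciSup_le' fun y => ?_) _
          exact le_trans Cardinal.mk_image_le (hAle y)
  refine ⟨main, fun hY hYle hinf => ?_⟩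
  have h1 : pdSpace X ≤ pdSpace (X × Y) := by
    apply ciSup_le'
    rintro ⟨U, hU⟩
    set W : X × Y → Set (X × Y) := fun p => U p.1 ×ˢ (univ : Set Y) with hWdef
    have hWN : NbhdAssign W := fun p => ⟨((hU p.1).1).prod isOpen_univ, ⟨(hU p.1).2, trivial⟩⟩
    obtain ⟨B, hB, hBpin⟩ := pdAssign_spec W hWN
    have hpin : ∀ x, ((Prod.fst '' B) ∩ U x).Nonempty := by
      intro x
      obtain ⟨y0⟩ := hY
      obtain ⟨⟨a, b⟩, hmem, ha, -⟩ := hBpin (x, y0)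
      exact ⟨a, ⟨(a, b), hmem, rfl⟩, ha⟩
    calc pdAssign U ≤ #(Prod.fst '' B) := pdAssign_le _ hpin
      _ ≤ #B := Cardinal.mk_image_le
      _ = pdAssign W := hB
      _ ≤ pdSpace (X × Y) := pdAssign_le_pdSpace _ hWN
  refine le_antisymm (main.trans ?_) h1
  calc #Y * pdSpace X ≤ pdSpace X * pdSpace X := mul_le_mul_left hYle _
    _ = pdSpace X := Cardinal.mul_eq_self hinf
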